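/- (L¹ uncertainty, finite measure, median zero.) Let (Ω,d,μ) be a metric measure space with μ(Ω) < ∞ whose isoperimetric profile I is concave, continuous, I(0) = 0, strictly positive on (0, μ(Ω)), symmetric about μ(Ω)/2, and increasing on (0, μ(Ω)/2]. Set Φ(t) = min{t, μ(Ω)/2}/I(min{t, μ(Ω)/2}), and let w : Ω → (0,∞) be an isoperimetric weight with constant C(w) = sup_{r>0} (1/r)·Φ(μ{w ≤ r}) < ∞. Let α > 0 and let f : Ω → ℝ be Lipschitz and integrable with |∇f| and w^α f integrable, such that 0 is a median of f, and assume the co-area inequality for f: ∫_{−∞}^{∞} I(μ{f > s}) ds ≤ ∫_Ω |∇f| dμ. Then for every r > 0, ∫_Ω |f| dμ ≤ 2 C(w) r ∫_Ω |∇f| dμ + 2 r^{−α} ∫_Ω w^α |f| dμ. -/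

import Mathlib

open MeasureTheory Filter Set Topology
open scoped ENNReal NNReal

/-- The modulus of the gradient of `f` at `x`:
`|∇f|(x) = limsup_{y→x} |f(x) - f(y)| / d(x,y)`. -/
noncomputable def gradMod {Ω : Type*} [MetricSpace Ω] (f : Ω → ℝ) (x : Ω) : ℝ :=
  Filter.limsup (fun y => |f x - f y| / dist x y) (𝓝[≠] x)

/-- The Minkowski content (perimeter) of a set `A`:
`μ⁺(A) = liminf_{h→0⁺} (μ(A_h) - μ(A))/h`, where `A_h` is the open `h`-thickening of `A`. -/
noncomputable def minkContent {Ω : Type*} [MetricSpace Ω] [MeasurableSpace Ω]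
    (μ : Measure Ω) (A : Set Ω) : ℝ≥0∞ :=
  Filter.liminf (fun h : ℝ => (μ (Metric.thickening h A) - μ A) / ENNReal.ofReal h)
    (𝓝[>] (0 : ℝ))

/-- The isoperimetric profile of `(Ω,d,μ)`:
`I(t) = inf {μ⁺(A) : A Borel, μ(A) = t}`. -/
noncomputable def isoProfile {Ω : Type*} [MetricSpace Ω] [MeasurableSpace Ω]
    (μ : Measure Ω) (t : ℝ≥0∞) : ℝ≥0∞ :=
  ⨅ (A : Set Ω) (_ : MeasurableSet A) (_ : μ A = t), minkContent μ A

/-- `m` is a median of `f` with respect to `μ`. -/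
def IsMedian {Ω : Type*} [MeasurableSpace Ω] (μ : Measure Ω) (f : Ω → ℝ) (m : ℝ) : Prop :=
  μ Set.univ / 2 ≤ μ {x | m ≤ f x} ∧ μ Set.univ / 2 ≤ μ {x | f x ≤ m}

/-- `Φ(t) = min{t, V/2} / I(min{t, V/2})` where `V = μ(Ω)`. -/
noncomputable def PhiIso (V : ℝ) (I : ℝ → ℝ) (t : ℝ) : ℝ :=
  min t (V / 2) / I (min t (V / 2))

/-!
Split `Ω` into `S = {w ≤ r}` and its complement. Off `S` we have `w > r`, hence
`|f| ≤ r^{-α} w^α |f|`. On `S` use the layer-cake formula. For `t > 0` the level sets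
`{f > t}` and `{f ≤ -t}` have measure at most `μ(Ω)/2` because `0` is a median, and for such a
set `A` the weight gives `μ(A ∩ S) ≤ C r I(μ A)`: concavity of `I` with `I 0 = 0` makes
`t ↦ t / I t` nondecreasing, so `μ(A ∩ S) / I(μ(A ∩ S)) ≤ Φ(μ S) ≤ C r`, and `I` is
nondecreasing up to `μ(Ω)/2`. Symmetry of `I` turns `I(μ{f ≤ -t})` into `I(μ{f > -t})`, so
integrating over `t > 0` both tails add up to the co-area integral `∫ I(μ{f > s}) ds ≤ ∫ |∇f|`.
-/

lemma gradMod_nonneg {Ω : Type*} [MetricSpace Ω] (f : Ω → ℝ) (x : Ω) : 0 ≤ gradMod f x := by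
  rw [gradMod, limsup_eq]
  rcases eq_or_neBot (𝓝[≠] x) with h | h
  · simp [h]
  · refine Real.sInf_nonneg fun a ha => ?_
    obtain ⟨y, hy⟩ := Eventually.exists (f := 𝓝[≠] x) ha
    exact (div_nonneg (abs_nonneg _) dist_nonneg).trans hy

section Profile

variable {V : ℝ} {I : ℝ → ℝ}

lemma profile_nonneg_of_le_half (hI0 : I 0 = 0) (hIpos : ∀ t : ℝ, 0 < t → t < V → 0 < I t)
    {t : ℝ} (ht : 0 ≤ t) (htV : t ≤ V / 2) : 0 ≤ I t := by
  rcases ht.eq_or_lt with rfl | ht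
  · exact hI0.ge
  · exact (hIpos t ht (by linarith)).le

lemma phiIso_nonneg (hI0 : I 0 = 0) (hIpos : ∀ t : ℝ, 0 < t → t < V → 0 < I t) (hV : 0 ≤ V)
    {t : ℝ} (ht : 0 ≤ t) : 0 ≤ PhiIso V I t := by
  have hmin : 0 ≤ min t (V / 2) := le_min ht (by linarith)
  exact div_nonneg hmin (profile_nonneg_of_le_half hI0 hIpos hmin (min_le_right _ _))

/-- `s`, `a`, `b` stand for `μ(A ∩ S)`, `μ A` and `μ S`. -/
lemma le_mul_profile_of_phiIso_le (hIconc : ConcaveOn ℝ (Icc 0 V) I) (hI0 : I 0 = 0)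
    (hIpos : ∀ t : ℝ, 0 < t → t < V → 0 < I t) (hImono : MonotoneOn I (Ioc 0 (V / 2)))
    {s a b c : ℝ} (hs : 0 ≤ s) (hsa : s ≤ a) (hsb : s ≤ b) (ha : a ≤ V / 2)
    (hc : PhiIso V I b ≤ c) : s ≤ c * I a := by
  have hc0 : 0 ≤ c := (phiIso_nonneg hI0 hIpos (by linarith) (hs.trans hsb)).trans hc
  rcases hs.eq_or_lt with rfl | hs
  · exact mul_nonneg hc0 (profile_nonneg_of_le_half hI0 hIpos hsa ha)
  set b' := min b (V / 2)
  have hb'V : b' ≤ V / 2 := min_le_right _ _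
  have hsb' : s ≤ b' := le_min hsb (hsa.trans ha)
  have hIs : 0 < I s := hIpos s hs (by linarith)
  have hIb' : 0 < I b' := hIpos b' (hs.trans_le hsb') (by linarith)
  have hslope : I b' / b' ≤ I s / s := by
    have h := hIconc.neg.secant_mono (a := 0) ⟨le_rfl, by linarith⟩ ⟨hs.le, by linarith⟩
      ⟨by linarith, by linarith⟩ hs.ne' (by linarith) hsb'
    simp only [Pi.neg_apply, hI0, neg_zero, sub_zero, neg_div] at h
    linarith
  have hratio : s / I s ≤ c :=
    calc s / I s ≤ b' / I b' := by
          rw [div_le_div_iff₀ (by linarith) hs] at hslope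
          rw [div_le_div_iff₀ hIs hIb']
          linarith
      _ ≤ c := hc
  calc s = s / I s * I s := (div_mul_cancel₀ _ hIs.ne').symm
    _ ≤ c * I a := mul_le_mul hratio (hImono ⟨hs, by linarith⟩ ⟨hs.trans_le hsa, ha⟩ hsa) hIs.le hc0

end Profile

section Measure

variable {Ω : Type*} [MeasurableSpace Ω] {μ : Measure Ω} [IsFiniteMeasure μ] {I : ℝ → ℝ}

lemma IsMedian.measure_gt_le_half {f : Ω → ℝ} {m : ℝ} (h : IsMedian μ f m)
    (hf : AEMeasurable f μ) : μ {x | m < f x} ≤ μ univ / 2 := by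
  have hset : {x | m < f x} = {x | f x ≤ m}ᶜ := by ext; simp
  rw [hset, measure_compl₀ (s := {x | f x ≤ m}) (hf.nullMeasurable measurableSet_Iic) (measure_ne_top _ _)]
  calc μ univ - μ {x | f x ≤ m} ≤ μ univ - μ univ / 2 := tsub_le_tsub_left h.2 _
    _ = μ univ / 2 := ENNReal.sub_half (measure_ne_top _ _)

lemma IsMedian.measure_lt_le_half {f : Ω → ℝ} {m : ℝ} (h : IsMedian μ f m)
    (hf : AEMeasurable f μ) : μ {x | f x < m} ≤ μ univ / 2 := by
  have hset : {x | f x < m} = {x | m ≤ f x}ᶜ := by ext; simp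
  rw [hset, measure_compl₀ (s := {x | m ≤ f x}) (hf.nullMeasurable measurableSet_Ici) (measure_ne_top _ _)]
  calc μ univ - μ {x | m ≤ f x} ≤ μ univ - μ univ / 2 := tsub_le_tsub_left h.1 _
    _ = μ univ / 2 := ENNReal.sub_half (measure_ne_top _ _)

lemma profile_measure_compl
    (hIsym : ∀ t ∈ Icc 0 (μ univ).toReal, I ((μ univ).toReal - t) = I t)
    {A : Set Ω} (hA : NullMeasurableSet A μ) : I (μ Aᶜ).toReal = I (μ A).toReal := by
  have hle : μ A ≤ μ univ := measure_mono (subset_univ A)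
  rw [measure_compl₀ hA (measure_ne_top _ _), ENNReal.toReal_sub_of_le hle (measure_ne_top _ _)]
  exact hIsym _ ⟨ENNReal.toReal_nonneg, ENNReal.toReal_mono (measure_ne_top _ _) hle⟩

lemma measure_inter_le_ofReal_mul_profile (hIconc : ConcaveOn ℝ (Icc 0 (μ univ).toReal) I)
    (hI0 : I 0 = 0) (hIpos : ∀ t : ℝ, 0 < t → t < (μ univ).toReal → 0 < I t)
    (hImono : MonotoneOn I (Ioc 0 ((μ univ).toReal / 2)))
    {S A B : Set Ω} {c : ℝ} (hc : PhiIso (μ univ).toReal I (μ S).toReal ≤ c)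
    (hA : μ A ≤ μ univ / 2) (hBA : B ⊆ A) :
    μ (B ∩ S) ≤ ENNReal.ofReal (c * I (μ A).toReal) := by
  have hA' : (μ A).toReal ≤ (μ univ).toReal / 2 := by
    simpa [ENNReal.toReal_div] using ENNReal.toReal_mono (by simp [ENNReal.div_eq_top]) hA
  rw [← ENNReal.ofReal_toReal (measure_ne_top μ (B ∩ S))]
  exact ENNReal.ofReal_le_ofReal <| le_mul_profile_of_phiIso_le hIconc hI0 hIpos hImono
    ENNReal.toReal_nonneg
    (ENNReal.toReal_mono (measure_ne_top _ _) (measure_mono (inter_subset_left.trans hBA)))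
    (ENNReal.toReal_mono (measure_ne_top _ _) (measure_mono inter_subset_right)) hA' hc

end Measure

lemma lintegral_Ioi_add_lintegral_Ioi_comp_neg_le (G : ℝ → ℝ≥0∞) :
    (∫⁻ t in Ioi 0, G t) + ∫⁻ t in Ioi 0, G (-t) ≤ ∫⁻ t, G t := by
  have hneg : ∫⁻ t in Ioi 0, G (-t) = ∫⁻ t in Iio 0, G t := by
    simpa using (Measure.measurePreserving_neg (volume : Measure ℝ)).setLIntegral_comp_preimage_emb
      measurableEmbedding_neg G (Iio 0)
  rw [hneg, ← lintegral_union measurableSet_Iio Ioi_disjoint_Iio_same]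
  exact setLIntegral_le_lintegral _ _

section Uncertainty

variable {Ω : Type*} [MeasurableSpace Ω] {μ : Measure Ω} {f : Ω → ℝ}

theorem lintegral_abs_restrict_le_mul_lintegral_profile [IsFiniteMeasure μ] {I : ℝ → ℝ}
    (hIconc : ConcaveOn ℝ (Icc 0 (μ univ).toReal) I) (hI0 : I 0 = 0)
    (hIpos : ∀ t : ℝ, 0 < t → t < (μ univ).toReal → 0 < I t)
    (hIsym : ∀ t ∈ Icc 0 (μ univ).toReal, I ((μ univ).toReal - t) = I t)
    (hImono : MonotoneOn I (Ioc 0 ((μ univ).toReal / 2)))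
    (hf : AEMeasurable f μ) (hmed : IsMedian μ f 0) {S : Set Ω} (hS : MeasurableSet S) {c : ℝ}
    (hc : PhiIso (μ univ).toReal I (μ S).toReal ≤ c) :
    ∫⁻ x in S, ENNReal.ofReal |f x| ∂μ ≤
      ENNReal.ofReal c * ∫⁻ s, ENNReal.ofReal (I (μ {x | s < f x}).toReal) := by
  set G : ℝ → ℝ≥0∞ := fun s => ENNReal.ofReal (I (μ {x | s < f x}).toReal)
  have hc0 : 0 ≤ c :=
    (phiIso_nonneg hI0 hIpos ENNReal.toReal_nonneg ENNReal.toReal_nonneg).trans hc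
  have hupper : ∀ t ∈ Ioi (0 : ℝ), μ ({x | t < f x} ∩ S) ≤ ENNReal.ofReal c * G t := by
    intro t (ht : 0 < t)
    rw [← ENNReal.ofReal_mul hc0]
    refine measure_inter_le_ofReal_mul_profile hIconc hI0 hIpos hImono hc ?_ subset_rfl
    exact (measure_mono fun x (hx : t < f x) => ht.trans hx).trans (hmed.measure_gt_le_half hf)
  have hlower : ∀ t ∈ Ioi (0 : ℝ), μ ({x | f x < -t} ∩ S) ≤ ENNReal.ofReal c * G (-t) := by
    intro t (ht : 0 < t)
    have hcompl : {x | -t < f x} = {x | f x ≤ -t}ᶜ := by ext; simp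
    have hsym : G (-t) = ENNReal.ofReal (I (μ {x | f x ≤ -t}).toReal) := by
      simp only [G, hcompl]
      rw [profile_measure_compl (A := {x | f x ≤ -t}) hIsym (hf.nullMeasurable measurableSet_Iic)]
    rw [hsym]
    rw [← ENNReal.ofReal_mul hc0]
    refine measure_inter_le_ofReal_mul_profile hIconc hI0 hIpos hImono hc ?_
      fun x (hx : f x < -t) => hx.le
    exact (measure_mono fun x (hx : f x ≤ -t) => show f x < 0 by linarith).trans (hmed.measure_lt_le_half hf)
  have hsplit : ∀ t ∈ Ioi (0 : ℝ), μ.restrict S {x | t < |f x|} =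
      μ ({x | t < f x} ∩ S) + μ ({x | f x < -t} ∩ S) := by
    intro t (ht : 0 < t)
    have hunion : {x | t < |f x|} ∩ S = ({x | t < f x} ∩ S) ∪ ({x | f x < -t} ∩ S) := by
      ext x; simp only [mem_inter_iff, mem_union, mem_ofPred_eq, lt_abs, lt_neg]; tauto
    rw [Measure.restrict_apply' hS, hunion, measure_union₀ (t := {x | f x < -t} ∩ S)
      ((hf.nullMeasurable measurableSet_Iio).inter hS.nullMeasurableSet)]
    have hdisj : Disjoint {x | t < f x} {x | f x < -t} :=
      disjoint_left.2 fun x (h : t < f x) (h' : f x < -t) => by linarith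
    exact (hdisj.mono inter_subset_left inter_subset_left).aedisjoint
  have hanti : Measurable fun t => μ ({x | t < f x} ∩ S) :=
    Antitone.measurable fun t t' htt' => measure_mono <|
      inter_subset_inter_left _ fun x (hx : t' < f x) => htt'.trans_lt hx
  calc ∫⁻ x in S, ENNReal.ofReal |f x| ∂μ
      = ∫⁻ t in Ioi 0, μ.restrict S {x | t < |f x|} :=
        lintegral_eq_lintegral_meas_lt _ (ae_of_all _ fun _ => abs_nonneg _) hf.abs.restrict
    _ = (∫⁻ t in Ioi 0, μ ({x | t < f x} ∩ S)) + ∫⁻ t in Ioi 0, μ ({x | f x < -t} ∩ S) := by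
        rw [setLIntegral_congr_fun measurableSet_Ioi hsplit, lintegral_add_left hanti]
    _ ≤ (∫⁻ t in Ioi 0, ENNReal.ofReal c * G t) + ∫⁻ t in Ioi 0, ENNReal.ofReal c * G (-t) :=
        add_le_add (setLIntegral_mono' measurableSet_Ioi hupper)
          (setLIntegral_mono' measurableSet_Ioi hlower)
    _ = ENNReal.ofReal c * ((∫⁻ t in Ioi 0, G t) + ∫⁻ t in Ioi 0, G (-t)) := by
        rw [lintegral_const_mul' _ _ ENNReal.ofReal_ne_top,
          lintegral_const_mul' _ _ ENNReal.ofReal_ne_top, mul_add]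
    _ ≤ ENNReal.ofReal c * ∫⁻ s, G s := by
        gcongr
        exact lintegral_Ioi_add_lintegral_Ioi_comp_neg_le G

theorem setIntegral_abs_le_rpow_neg_mul_integral {w : Ω → ℝ} (hw : Measurable w)
    (hw_pos : ∀ x, 0 < w x) {α r : ℝ} (hα : 0 ≤ α) (hr : 0 < r)
    (hwf : Integrable (fun x => w x ^ α * f x) μ) :
    ∫ x in {x | w x ≤ r}ᶜ, |f x| ∂μ ≤ r ^ (-α) * ∫ x, w x ^ α * |f x| ∂μ := by
  have hwf' : Integrable (fun x => w x ^ α * |f x|) μ := hwf.abs.congr <| ae_of_all _ fun x => by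
    simp [abs_mul, abs_of_pos (Real.rpow_pos_of_pos (hw_pos x) α)]
  have hpoint : ∀ x ∈ {x | w x ≤ r}ᶜ, |f x| ≤ r ^ (-α) * (w x ^ α * |f x|) := by
    intro x (hx : ¬ w x ≤ r)
    have hrw : r ^ α ≤ w x ^ α := Real.rpow_le_rpow hr.le (not_le.1 hx).le hα
    rw [Real.rpow_neg hr.le, ← mul_assoc, inv_mul_eq_div]
    exact le_mul_of_one_le_left (abs_nonneg _)
      ((one_le_div (Real.rpow_pos_of_pos hr α)).2 hrw)
  calc ∫ x in {x | w x ≤ r}ᶜ, |f x| ∂μ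
      ≤ ∫ x in {x | w x ≤ r}ᶜ, r ^ (-α) * (w x ^ α * |f x|) ∂μ :=
        integral_mono_of_nonneg (ae_of_all _ fun _ => abs_nonneg _)
          (hwf'.const_mul _).integrableOn
          (ae_restrict_of_forall_mem (hw measurableSet_Iic).compl hpoint)
    _ = r ^ (-α) * ∫ x in {x | w x ≤ r}ᶜ, w x ^ α * |f x| ∂μ := integral_const_mul _ _
    _ ≤ r ^ (-α) * ∫ x, w x ^ α * |f x| ∂μ :=
        mul_le_mul_of_nonneg_left (setIntegral_le_integral hwf' (ae_of_all _ fun x =>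
          mul_nonneg (Real.rpow_nonneg (hw_pos x).le α) (abs_nonneg _)))
          (Real.rpow_nonneg hr.le _)

end Uncertainty

theorem l1_uncertainty_median_zero_general {Ω : Type*} [MetricSpace Ω] [MeasurableSpace Ω]
    (μ : Measure Ω) [IsFiniteMeasure μ]
    (I : ℝ → ℝ)
    (hIconc : ConcaveOn ℝ (Set.Icc 0 (μ Set.univ).toReal) I)
    (hI0 : I 0 = 0)
    (hIpos : ∀ t : ℝ, 0 < t → t < (μ Set.univ).toReal → 0 < I t)
    (hIsym : ∀ t ∈ Set.Icc 0 (μ Set.univ).toReal, I ((μ Set.univ).toReal - t) = I t)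
    (hImono : MonotoneOn I (Set.Ioc 0 ((μ Set.univ).toReal / 2)))
    (w : Ω → ℝ) (hw_meas : Measurable w) (hw_pos : ∀ x, 0 < w x)
    (C : ℝ)
    (hC : ∀ r : ℝ, 0 < r →
      PhiIso (μ Set.univ).toReal I ((μ {x | w x ≤ r}).toReal) ≤ C * r)
    (α : ℝ) (hα : 0 < α)
    (f : Ω → ℝ)
    (hfint : Integrable f μ)
    (hwfint : Integrable (fun x => w x ^ α * f x) μ)
    (hmed : IsMedian μ f 0)
    (hcoarea : ∫⁻ s : ℝ, ENNReal.ofReal (I ((μ {x | s < f x}).toReal)) ≤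
      ENNReal.ofReal (∫ x, gradMod f x ∂μ)) :
    ∀ r : ℝ, 0 < r →
      ∫ x, |f x| ∂μ ≤
        2 * C * r * ∫ x, gradMod f x ∂μ + 2 * r ^ (-α) * ∫ x, w x ^ α * |f x| ∂μ := by
  intro r hr
  have hS : MeasurableSet {x | w x ≤ r} := hw_meas measurableSet_Iic
  have hCr : 0 ≤ C * r :=
    (phiIso_nonneg hI0 hIpos ENNReal.toReal_nonneg ENNReal.toReal_nonneg).trans (hC r hr)
  have hgrad : 0 ≤ ∫ x, gradMod f x ∂μ := integral_nonneg (gradMod_nonneg f)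
  have hinner : ∫ x in {x | w x ≤ r}, |f x| ∂μ ≤ C * r * ∫ x, gradMod f x ∂μ := by
    have h := (lintegral_abs_restrict_le_mul_lintegral_profile hIconc hI0 hIpos hIsym hImono
      hfint.aemeasurable hmed hS (hC r hr)).trans (mul_le_mul_right hcoarea _)
    rw [← ENNReal.ofReal_mul hCr, ← ofReal_integral_eq_lintegral_ofReal hfint.abs.restrict
      (ae_of_all _ fun _ => abs_nonneg _)] at h
    exact (ENNReal.ofReal_le_ofReal_iff (mul_nonneg hCr hgrad)).1 h
  have houter := setIntegral_abs_le_rpow_neg_mul_integral hw_meas hw_pos hα.le hr hwfint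
  have hinner_nonneg : 0 ≤ ∫ x in {x | w x ≤ r}, |f x| ∂μ :=
    setIntegral_nonneg hS fun _ _ => abs_nonneg _
  have houter_nonneg : 0 ≤ ∫ x in {x | w x ≤ r}ᶜ, |f x| ∂μ :=
    setIntegral_nonneg hS.compl fun _ _ => abs_nonneg _
  rw [← integral_add_compl hS hfint.abs]
  linarith

/-- **L¹ uncertainty, finite measure, median zero.**
If `w` is an isoperimetric weight with constant `C`, `α > 0` and `f` is Lipschitz,
integrable, with `|∇f|` and `w^α f` integrable, `0` a median of `f`, and `f` satisfies
the co-area inequality, then for every `r > 0`,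
`∫|f| dμ ≤ 2 C r ∫|∇f| dμ + 2 r^{-α} ∫ w^α |f| dμ`. -/
theorem l1_uncertainty_median_zero {Ω : Type*} [MetricSpace Ω] [MeasurableSpace Ω]
    [BorelSpace Ω] (μ : Measure Ω) [IsFiniteMeasure μ] [IsFiniteMeasureOnCompacts μ]
    (I : ℝ → ℝ)
    (hIprof : ∀ t : ℝ, 0 ≤ t → ENNReal.ofReal t < μ Set.univ →
      ENNReal.ofReal (I t) = isoProfile μ (ENNReal.ofReal t))
    (hIconc : ConcaveOn ℝ (Set.Icc 0 (μ Set.univ).toReal) I)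
    (hIcont : ContinuousOn I (Set.Icc 0 (μ Set.univ).toReal))
    (hI0 : I 0 = 0)
    (hIpos : ∀ t : ℝ, 0 < t → t < (μ Set.univ).toReal → 0 < I t)
    (hIsym : ∀ t ∈ Set.Icc 0 (μ Set.univ).toReal, I ((μ Set.univ).toReal - t) = I t)
    (hImono : MonotoneOn I (Set.Ioc 0 ((μ Set.univ).toReal / 2)))
    (w : Ω → ℝ) (hw_meas : Measurable w) (hw_pos : ∀ x, 0 < w x)
    (C : ℝ)
    (hC : ∀ r : ℝ, 0 < r →
      PhiIso (μ Set.univ).toReal I ((μ {x | w x ≤ r}).toReal) ≤ C * r)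
    (α : ℝ) (hα : 0 < α)
    (K : ℝ≥0) (f : Ω → ℝ) (hlip : LipschitzWith K f)
    (hfint : Integrable f μ) (hgint : Integrable (gradMod f) μ)
    (hwfint : Integrable (fun x => w x ^ α * f x) μ)
    (hmed : IsMedian μ f 0)
    (hcoarea : ∫⁻ s : ℝ, ENNReal.ofReal (I ((μ {x | s < f x}).toReal)) ≤
      ENNReal.ofReal (∫ x, gradMod f x ∂μ)) :
    ∀ r : ℝ, 0 < r →
      ∫ x, |f x| ∂μ ≤
        2 * C * r * ∫ x, gradMod f x ∂μ + 2 * r ^ (-α) * ∫ x, w x ^ α * |f x| ∂μ :=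
  l1_uncertainty_median_zero_general μ I hIconc hI0 hIpos hIsym hImono w hw_meas hw_pos C hC α hα f
    hfint hwfint hmed hcoarea
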